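/- Let X ⊆ P^N be an irreducible projective variety whose generic Hadamard rank is finite, i.e., there exists m with {p : Hrk_X(p) ≤ m} Zariski dense in P^N. Then every point x = (x_0:...:x_N) with all coordinates x_i nonzero satisfies Hrk_X(x) ≤ 2m, where Hrk_X(p) is the least number of points of X whose Hadamard product equals p. -/

import Mathlib

/-- The Zariski closure of a subset of affine space `ℂ^n`: the set of points on which every
polynomial vanishing identically on `S` vanishes. -/
def zariskiClosure {n : ℕ} (S : Set (Fin n → ℂ)) : Set (Fin n → ℂ) :=
  {x | ∀ p : MvPolynomial (Fin n) ℂ, (∀ y ∈ S, MvPolynomial.eval y p = 0) →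
    MvPolynomial.eval x p = 0}

/-- A set is Zariski closed if it equals its Zariski closure. -/
def IsZariskiClosed {n : ℕ} (S : Set (Fin n → ℂ)) : Prop :=
  zariskiClosure S = S

/-- Irreducibility with respect to the Zariski topology. -/
def ZariskiIrreducible {n : ℕ} (S : Set (Fin n → ℂ)) : Prop :=
  S.Nonempty ∧ ∀ C₁ C₂ : Set (Fin n → ℂ), IsZariskiClosed C₁ → IsZariskiClosed C₂ →
    S ⊆ C₁ ∪ C₂ → S ⊆ C₁ ∨ S ⊆ C₂

/-- The Hadamard product of two subsets (affine cones over projective varieties): the Zariski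
closure of the set of coordinatewise products `x ⋆ y` which are defined (i.e. nonzero). -/
def hadamardSetProd {n : ℕ} (X Y : Set (Fin n → ℂ)) : Set (Fin n → ℂ) :=
  zariskiClosure {z | ∃ x ∈ X, ∃ y ∈ Y, z = x * y ∧ x * y ≠ 0}

/-- Hadamard powers: `X^{⋆1} = X` and `X^{⋆(m+1)} = X ⋆ X^{⋆m}`. -/
def hadamardPow {n : ℕ} (X : Set (Fin n → ℂ)) : ℕ → Set (Fin n → ℂ)
  | 0 => {1}
  | 1 => X
  | (m + 2) => hadamardSetProd X (hadamardPow X (m + 1))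

/-- `p` is the Hadamard product of exactly `r` points of `X` (as projective points, i.e. up to a
nonzero scalar in the affine cone model). -/
def HadamardDecomp {n : ℕ} (X : Set (Fin n → ℂ)) (p : Fin n → ℂ) (r : ℕ) : Prop :=
  ∃ q : Fin r → (Fin n → ℂ), (∀ i, q i ∈ X) ∧
    ∃ c : ℂ, c ≠ 0 ∧ p = c • fun j => ∏ i, q i j

/-- The Hadamard rank of `p` with respect to `X` is at most `m`: `p` is the Hadamard product of
`r` points of `X` for some `1 ≤ r ≤ m`. -/
def HadamardRankLE {n : ℕ} (X : Set (Fin n → ℂ)) (p : Fin n → ℂ) (m : ℕ) : Prop :=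
  ∃ r : ℕ, 1 ≤ r ∧ r ≤ m ∧ HadamardDecomp X p r

/-!
For some `r ≤ m` the product map `X^r → 𝔸^{N+1}`, `(q_i) ↦ ⋆ᵢ qᵢ`, is dominant: the points of rank
at most `m` are covered by the images of the finitely many maps with `r ≤ m` (scalars are absorbed
into `X`, a cone). By Chevalley's theorem its image contains a nonempty principal open set `D(f)`,
and since `X` is closed every point of `D(f)` has rank at most `r`. For `x` in the torus, the
Cremona transform `z ↦ f (x / z)` is a nonzero polynomial up to a monomial factor, so some `y` in
the torus has `f y ≠ 0` and `f (x / y) ≠ 0`, and `x = y ⋆ (x / y)` has rank at most `2 r`.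
-/

open MvPolynomial Topology

theorem PrimeSpectrum.isConstructible_zeroLocus_of_fg {R : Type*} [CommRing R] {I : Ideal R}
    (hI : I.FG) : IsConstructible (zeroLocus (I : Set R)) := by
  simpa using ((isRetrocompact_zeroLocus_compl_of_fg hI).isConstructible
    (isClosed_zeroLocus _).isOpen_compl).compl

theorem PrimeSpectrum.exists_ne_zero_basicOpen_subset_of_isConstructible {R : Type*} [CommRing R]
    [IsDomain R] {s : Set (PrimeSpectrum R)} (hs : IsConstructible s) (hbot : ⊥ ∈ s) :
    ∃ f : R, f ≠ 0 ∧ (basicOpen f : Set (PrimeSpectrum R)) ⊆ s := by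
  obtain ⟨S, rfl⟩ := exists_constructibleSetData_iff.mpr hs
  simp only [ConstructibleSetData.toSet, Set.mem_iUnion] at hbot
  obtain ⟨C, hC, hg, hf⟩ := hbot
  simp only [mem_zeroLocus, Set.range_subset_iff, Set.singleton_subset_iff] at hg hf
  refine ⟨C.f, hf, fun x hx => Set.mem_biUnion hC ⟨?_, ?_⟩⟩
  · simp only [mem_zeroLocus, Set.range_subset_iff]
    intro i
    simp [show C.g i = 0 from hg i]
  · simpa using hx

namespace MvPolynomial

section Chevalley

variable {K σ τ : Type*} [Field K] [Finite σ] [Finite τ]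

theorem exists_ne_zero_basicOpen_subset_image_comap
    (φ : MvPolynomial σ K →ₐ[K] MvPolynomial τ K) (I : Ideal (MvPolynomial τ K))
    (hI : I.comap φ = ⊥) :
    ∃ f : MvPolynomial σ K, f ≠ 0 ∧ (PrimeSpectrum.basicOpen f : Set _) ⊆
      PrimeSpectrum.comap φ.toRingHom '' PrimeSpectrum.zeroLocus I := by
  have hφ : φ.toRingHom.FinitePresentation :=
    .of_comp_finiteType (algebraMap K _)
      (φ.comp_algebraMap ▸ RingHom.finitePresentation_algebraMap.mpr inferInstance)
      (RingHom.finiteType_algebraMap.mpr inferInstance)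
  refine PrimeSpectrum.exists_ne_zero_basicOpen_subset_of_isConstructible
    (PrimeSpectrum.isConstructible_comap_image hφ
      (PrimeSpectrum.isConstructible_zeroLocus_of_fg (IsNoetherian.noetherian I))) ?_
  obtain ⟨p, hp, hIp, hpφ⟩ := Ideal.exists_comap_eq_of_mem_minimalPrimes φ.toRingHom ⊥ (by
    rw [AlgHom.toRingHom_eq_coe, Ideal.comap_coe, hI]
    show ⊥ ∈ minimalPrimes _
    rw [IsDomain.minimalPrimes_eq_singleton_bot]
    rfl)
  exact ⟨⟨p, hp⟩, hIp, PrimeSpectrum.ext hpφ⟩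

/-- Chevalley's theorem on `K`-points: the image of a dominant morphism to affine space contains a
nonempty principal open set. -/
theorem exists_ne_zero_forall_exists_mem_zeroLocus [IsAlgClosed K]
    (φ : MvPolynomial σ K →ₐ[K] MvPolynomial τ K) (I : Ideal (MvPolynomial τ K))
    (hI : I.comap φ = ⊥) :
    ∃ f : MvPolynomial σ K, f ≠ 0 ∧ ∀ y : σ → K, aeval y f ≠ 0 →
      ∃ q ∈ zeroLocus K I, ∀ j, aeval q (φ (X j)) = y j := by
  obtain ⟨f, hf0, hfs⟩ := exists_ne_zero_basicOpen_subset_image_comap φ I hI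
  refine ⟨f, hf0, fun y hy => ?_⟩
  have hyf : pointToPoint y ∈ PrimeSpectrum.basicOpen f := by
    simpa [pointToPoint, mem_vanishingIdeal_singleton_iff] using hy
  obtain ⟨Q, hIQ, hQ⟩ := hfs hyf
  obtain ⟨M, hM, hQM⟩ := Ideal.exists_le_maximal Q.asIdeal Q.2.ne_top
  obtain ⟨q, rfl⟩ := eq_vanishingIdeal_singleton_of_isMaximal K hM
  have hqy : (vanishingIdeal K {q}).comap φ = vanishingIdeal K {y} := by
    refine ((inferInstance : (vanishingIdeal K {y}).IsMaximal).eq_of_le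
      (Ideal.comap_ne_top _ hM.ne_top) ?_).symm
    calc vanishingIdeal K {y} = (PrimeSpectrum.comap φ.toRingHom Q).asIdeal := by rw [hQ]; rfl
      _ ≤ _ := Ideal.comap_mono hQM
  refine ⟨q, le_zeroLocus_iff_le_vanishingIdeal.mpr (hIQ.trans hQM) rfl, fun j => ?_⟩
  have : X j - C (y j) ∈ (vanishingIdeal K {q}).comap φ := by
    rw [hqy, mem_vanishingIdeal_singleton_iff]
    simp
  simpa [sub_eq_zero, mem_vanishingIdeal_singleton_iff] using this

end Chevalley

section Torus

variable {K σ : Type*} [Field K] [Fintype σ]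

theorem exists_forall_ne_zero_eval_ne_zero [Infinite K] {p : MvPolynomial σ K} (hp : p ≠ 0) :
    ∃ z : σ → K, (∀ j, z j ≠ 0) ∧ eval z p ≠ 0 := by
  have hpX : p * ∏ j, X j ≠ 0 :=
    mul_ne_zero hp (Finset.prod_ne_zero_iff.mpr fun j _ => X_ne_zero j)
  obtain ⟨z, hz⟩ : ∃ z, eval z (p * ∏ j, X j) ≠ 0 := by
    by_contra! h
    exact hpX (MvPolynomial.funext fun z => by simp [h z])
  simp only [map_mul, map_prod, eval_X, mul_ne_zero_iff, Finset.prod_ne_zero_iff,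
    Finset.mem_univ, true_implies] at hz
  exact ⟨z, hz.2, hz.1⟩

theorem exists_eval_eq_prod_pow_mul_eval_div (f : MvPolynomial σ K) (x : σ → K) :
    ∃ (g : MvPolynomial σ K) (d : ℕ), ∀ z : σ → K, (∀ j, z j ≠ 0) →
      eval z g = (∏ j, z j) ^ d * eval (x / z) f := by
  set d := f.totalDegree
  refine ⟨∑ α ∈ f.support, C (coeff α f * ∏ j, x j ^ α j) * ∏ j, X j ^ (d - α j), d,
    fun z hz => ?_⟩
  rw [eval_eq' (x / z) f, Finset.mul_sum]
  simp only [map_sum, map_mul, eval_C, map_prod, map_pow, eval_X]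
  refine Finset.sum_congr rfl fun α hα => ?_
  have hαd : ∀ j, α j ≤ d := fun j =>
    (monomial_le_degreeOf j hα).trans (degreeOf_le_totalDegree f j)
  have key : ∏ j, x j ^ α j * z j ^ (d - α j) = ∏ j, z j ^ d * (x / z) j ^ α j := by
    refine Finset.prod_congr rfl fun j _ => ?_
    rw [Pi.div_apply, div_pow, ← pow_mul_pow_sub (z j) (hαd j)]
    field_simp [hz j]
  rw [Finset.prod_mul_distrib, Finset.prod_mul_distrib, Finset.prod_pow] at key
  linear_combination coeff α f * key

theorem exists_eval_ne_zero_and_eval_div_ne_zero [Infinite K] {f : MvPolynomial σ K} (hf : f ≠ 0)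
    {x : σ → K} (hx : ∀ j, x j ≠ 0) :
    ∃ y : σ → K, (∀ j, y j ≠ 0) ∧ eval y f ≠ 0 ∧ eval (x / y) f ≠ 0 := by
  obtain ⟨g, d, hg⟩ := exists_eval_eq_prod_pow_mul_eval_div f x
  have hg0 : g ≠ 0 := by
    obtain ⟨w, hw, hfw⟩ := exists_forall_ne_zero_eval_ne_zero hf
    have hxw : ∀ j, (x / w) j ≠ 0 := fun j => div_ne_zero (hx j) (hw j)
    have hxxw : x / (x / w) = w := by ext j; exact div_div_cancel₀ (hx j)
    intro h
    have := hg (x / w) hxw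
    rw [h, map_zero, hxxw] at this
    exact mul_ne_zero (pow_ne_zero _ (Finset.prod_ne_zero_iff.mpr fun j _ => hxw j)) hfw this.symm
  obtain ⟨y, hy, hfg⟩ := exists_forall_ne_zero_eval_ne_zero (mul_ne_zero hf hg0)
  rw [map_mul, mul_ne_zero_iff, hg y hy, mul_ne_zero_iff] at hfg
  exact ⟨y, hy, hfg.1, hfg.2.2⟩

end Torus

end MvPolynomial

section Rows

variable {K ι : Type*} [Field K]

def rowsIn (κ : Type*) (X : Set (ι → K)) : Set (κ × ι → K) :=
  {q | ∀ i, (fun j => q (i, j)) ∈ X}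

noncomputable def rowProd (κ : Type*) [Fintype κ] : MvPolynomial ι K →ₐ[K] MvPolynomial (κ × ι) K :=
  aeval fun j => ∏ i, X (i, j)

theorem aeval_rowProd {κ : Type*} [Fintype κ] (q : κ × ι → K) (p : MvPolynomial ι K) :
    aeval q (rowProd κ p) = aeval (fun j => ∏ i, q (i, j)) p := by
  rw [rowProd, ← AlgHom.comp_apply, comp_aeval]
  simp

theorem zeroLocus_vanishingIdeal_rowsIn_subset (κ : Type*) {X : Set (ι → K)}
    (hX : zeroLocus K (vanishingIdeal K X) ⊆ X) :
    zeroLocus K (vanishingIdeal K (rowsIn κ X)) ⊆ rowsIn κ X := by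
  intro q hq i
  refine hX fun p hp => ?_
  have hpi : rename (Prod.mk i) p ∈ vanishingIdeal K (rowsIn κ X) := fun q' hq' => by
    rw [aeval_rename]; exact hp _ (hq' i)
  simpa [aeval_rename, Function.comp_def] using hq _ hpi

end Rows

section Hadamard

variable {n : ℕ} {X : Set (Fin n → ℂ)}

theorem zariskiClosure_eq_zeroLocus_vanishingIdeal (S : Set (Fin n → ℂ)) :
    zariskiClosure S = zeroLocus ℂ (vanishingIdeal ℂ S) := by
  ext x
  simp [zariskiClosure]

theorem vanishingIdeal_eq_bot_of_zariskiClosure_eq_univ {S : Set (Fin n → ℂ)}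
    (h : zariskiClosure S = Set.univ) : vanishingIdeal ℂ S = ⊥ := by
  refine eq_bot_iff.mpr fun p hp => MvPolynomial.funext fun x => ?_
  have hx : x ∈ zariskiClosure S := h ▸ Set.mem_univ x
  simpa using hx p (by simpa using hp)

theorem HadamardDecomp.of_mem_rowsIn {r : ℕ} {q : Fin r × Fin n → ℂ}
    (hq : q ∈ rowsIn (Fin r) X) : HadamardDecomp X (fun j => ∏ i, q (i, j)) r :=
  ⟨fun i j => q (i, j), hq, 1, one_ne_zero, by simp⟩

theorem HadamardDecomp.exists_mem_rowsIn (hcone : ∀ c : ℂ, c ≠ 0 → ∀ x ∈ X, c • x ∈ X)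
    {p : Fin n → ℂ} {r : ℕ} (hr : 1 ≤ r) (hp : HadamardDecomp X p r) :
    ∃ q ∈ rowsIn (Fin r) X, p = fun j => ∏ i, q (i, j) := by
  obtain ⟨r, rfl⟩ : ∃ r', r = r' + 1 := ⟨r - 1, by omega⟩
  obtain ⟨q, hq, c, hc, rfl⟩ := hp
  let q' : Fin (r + 1) → Fin n → ℂ := Fin.cons (c • q 0) (Fin.tail q)
  refine ⟨fun s => q' s.1 s.2, fun i => ?_, ?_⟩
  · refine Fin.cases ?_ (fun i => ?_) i
    · exact hcone c hc _ (hq 0)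
    · exact hq i.succ
  · ext j
    simp [q', Fin.prod_univ_succ, Fin.tail, mul_assoc]

theorem HadamardDecomp.mul {p p' : Fin n → ℂ} {r r' : ℕ} (hp : HadamardDecomp X p r)
    (hp' : HadamardDecomp X p' r') : HadamardDecomp X (p * p') (r + r') := by
  obtain ⟨q, hq, c, hc, rfl⟩ := hp
  obtain ⟨q', hq', c', hc', rfl⟩ := hp'
  refine ⟨Fin.append q q', Fin.addCases (by simpa using hq) (by simpa using hq'), c * c',
    mul_ne_zero hc hc', ?_⟩
  ext j
  simp only [Pi.mul_apply, Pi.smul_apply, smul_eq_mul, Fin.prod_univ_add, Fin.append_left,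
    Fin.append_right]
  ring

theorem exists_comap_rowProd_vanishingIdeal_eq_bot
    (hcone : ∀ c : ℂ, c ≠ 0 → ∀ x ∈ X, c • x ∈ X) {m : ℕ}
    (hdense : vanishingIdeal ℂ {p | HadamardRankLE X p m} = ⊥) :
    ∃ r, 1 ≤ r ∧ r ≤ m ∧ (vanishingIdeal ℂ (rowsIn (Fin r) X)).comap (rowProd (Fin r)) = ⊥ := by
  have hinf : (Finset.Icc 1 m).inf
      (fun r => (vanishingIdeal ℂ (rowsIn (Fin r) X)).comap (rowProd (Fin r))) ≤ ⊥ := by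
    intro g hg
    rw [← hdense]
    rintro p ⟨r, hr1, hrm, hp⟩
    obtain ⟨q, hq, rfl⟩ := hp.exists_mem_rowsIn hcone hr1
    have hgr := Finset.inf_le (f := fun r => (vanishingIdeal ℂ (rowsIn (Fin r) X)).comap
      (rowProd (Fin r))) (Finset.mem_Icc.mpr ⟨hr1, hrm⟩) hg
    simpa [aeval_rowProd] using hgr q hq
  obtain ⟨r, hr, hle⟩ := Ideal.isPrime_bot.inf_le'.mp hinf
  exact ⟨r, (Finset.mem_Icc.mp hr).1, (Finset.mem_Icc.mp hr).2, le_bot_iff.mp hle⟩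

theorem exists_ne_zero_forall_hadamardDecomp (hclosed : IsZariskiClosed X) {r : ℕ}
    (hr : (vanishingIdeal ℂ (rowsIn (Fin r) X)).comap (rowProd (Fin r)) = ⊥) :
    ∃ f : MvPolynomial (Fin n) ℂ, f ≠ 0 ∧ ∀ y, eval y f ≠ 0 → HadamardDecomp X y r := by
  obtain ⟨f, hf0, hf⟩ := exists_ne_zero_forall_exists_mem_zeroLocus (rowProd (Fin r)) _ hr
  have hX : zeroLocus ℂ (vanishingIdeal ℂ X) ⊆ X :=
    ((zariskiClosure_eq_zeroLocus_vanishingIdeal X).symm.trans hclosed).subset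
  refine ⟨f, hf0, fun y hy => ?_⟩
  obtain ⟨q, hq, hqy⟩ := hf y (by simpa using hy)
  convert HadamardDecomp.of_mem_rowsIn (zeroLocus_vanishingIdeal_rowsIn_subset _ hX hq) using 1
  ext j
  rw [← hqy j, aeval_rowProd]
  simp

end Hadamard

theorem maxHadamardRank_le_two_mul_generic_general (N : ℕ) (X : Set (Fin (N + 1) → ℂ))
    (hclosed : IsZariskiClosed X)
    (hcone : ∀ c : ℂ, c ≠ 0 → ∀ x ∈ X, c • x ∈ X)
    (m : ℕ)
    (hdense : zariskiClosure {p | HadamardRankLE X p m} = Set.univ) :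
    ∀ x : Fin (N + 1) → ℂ, (∀ i, x i ≠ 0) → HadamardRankLE X x (2 * m) := by
  intro x hx
  obtain ⟨r, hr1, hrm, hr⟩ := exists_comap_rowProd_vanishingIdeal_eq_bot hcone
    (vanishingIdeal_eq_bot_of_zariskiClosure_eq_univ hdense)
  obtain ⟨f, hf0, hf⟩ := exists_ne_zero_forall_hadamardDecomp hclosed hr
  obtain ⟨y, hy, hfy, hfxy⟩ := exists_eval_ne_zero_and_eval_div_ne_zero hf0 hx
  have hxy : y * (x / y) = x := by ext j; exact mul_div_cancel₀ (x j) (hy j)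
  exact ⟨r + r, by omega, by omega, hxy ▸ (hf y hfy).mul (hf _ hfxy)⟩

/-- Let `X ⊆ ℙ^N` be an irreducible projective variety (affine cone model) whose
generic Hadamard rank is finite: for some `m ≥ 1` the points of Hadamard `X`-rank at most `m`
are Zariski dense.  Then every point `x` with all coordinates nonzero satisfies
`Hrk_X(x) ≤ 2m`. -/
theorem maxHadamardRank_le_two_mul_generic (N : ℕ) (X : Set (Fin (N + 1) → ℂ))
    (hclosed : IsZariskiClosed X) (hirr : ZariskiIrreducible X)
    (hcone : ∀ c : ℂ, c ≠ 0 → ∀ x ∈ X, c • x ∈ X)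
    (m : ℕ) (hm : 1 ≤ m)
    (hdense : zariskiClosure {p | HadamardRankLE X p m} = Set.univ) :
    ∀ x : Fin (N + 1) → ℂ, (∀ i, x i ≠ 0) → HadamardRankLE X x (2 * m) :=
  maxHadamardRank_le_two_mul_generic_general N X hclosed hcone m hdense
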